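/- For any smooth ℂ²-valued ψ and real vector potential A on ℝ² with σ·(−i∇+A)ψ = 0, the pointwise improved diamagnetic inequality |(−i∇ + A)ψ|² ≥ 2|∇|ψ||² holds almost everywhere. -/

import Mathlib

open MeasureTheory Real Complex

/-- The Euclidean (Hermitian) norm on ℂ². -/
noncomputable def enorm2 (v : Fin 2 → ℂ) : ℝ := ‖(WithLp.equiv 2 (Fin 2 → ℂ)).symm v‖

/-- The covariant derivative (−i∂_j + A_j)ψ. -/
noncomputable def covD (A : EuclideanSpace ℝ (Fin 2) → ℝ) (j : Fin 2)
    (ψ : EuclideanSpace ℝ (Fin 2) → Fin 2 → ℂ) (x : EuclideanSpace ℝ (Fin 2)) : Fin 2 → ℂ :=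
  (-Complex.I) • fderiv ℝ ψ x (EuclideanSpace.single j 1) + (A x : ℂ) • ψ x

/-- The 2D Pauli-Dirac operator σ·(−i∇+A)ψ. -/
noncomputable def pauliOp (A1 A2 : EuclideanSpace ℝ (Fin 2) → ℝ)
    (ψ : EuclideanSpace ℝ (Fin 2) → Fin 2 → ℂ) (x : EuclideanSpace ℝ (Fin 2)) : Fin 2 → ℂ :=
  (!![0, 1; 1, 0] : Matrix (Fin 2) (Fin 2) ℂ).mulVec (covD A1 0 ψ x)
    + (!![0, -Complex.I; Complex.I, 0] : Matrix (Fin 2) (Fin 2) ℂ).mulVec (covD A2 1 ψ x)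

lemma enorm2_eq (v : Fin 2 → ℂ) :
    enorm2 v
      = Real.sqrt ((v 0).re * (v 0).re + (v 0).im * (v 0).im
          + ((v 1).re * (v 1).re + (v 1).im * (v 1).im)) := by
  rw [enorm2, EuclideanSpace.norm_eq]
  congr 1
  simp only [Fin.sum_univ_two, WithLp.equiv_symm_apply, WithLp.ofLp_toLp,
    Complex.sq_norm, Complex.normSq_apply]

lemma enorm2_sq (v : Fin 2 → ℂ) :
    enorm2 v ^ 2 = Complex.normSq (v 0) + Complex.normSq (v 1) := by
  have hnn : (0:ℝ) ≤ (v 0).re * (v 0).re + (v 0).im * (v 0).im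
      + ((v 1).re * (v 1).re + (v 1).im * (v 1).im) := by
    nlinarith [mul_self_nonneg (v 0).re, mul_self_nonneg (v 0).im,
      mul_self_nonneg (v 1).re, mul_self_nonneg (v 1).im]
  rw [enorm2_eq, Real.sq_sqrt hnn, Complex.normSq_apply, Complex.normSq_apply]

lemma opnorm_sq_le (L : EuclideanSpace ℝ (Fin 2) →L[ℝ] ℝ) :
    ‖L‖ ^ 2 ≤ L (EuclideanSpace.single 0 1) ^ 2 + L (EuclideanSpace.single 1 1) ^ 2 := by
  set a := L (EuclideanSpace.single 0 1)
  set b := L (EuclideanSpace.single 1 1)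
  have hM : ‖L‖ ≤ Real.sqrt (a ^ 2 + b ^ 2) := by
    apply L.opNorm_le_bound (Real.sqrt_nonneg _)
    intro h
    have hdecomp : h = EuclideanSpace.single 0 (h 0) + EuclideanSpace.single 1 (h 1) := by
      ext i
      fin_cases i <;> simp [EuclideanSpace.single_apply]
    have hL : L h = h 0 * a + h 1 * b := by
      conv_lhs => rw [hdecomp]
      have e0 : EuclideanSpace.single (0 : Fin 2) (h 0) = h 0 • EuclideanSpace.single 0 (1:ℝ) := by
        ext i; simp [EuclideanSpace.single_apply, mul_comm]
      have e1 : EuclideanSpace.single (1 : Fin 2) (h 1) = h 1 • EuclideanSpace.single 1 (1:ℝ) := by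
        ext i; simp [EuclideanSpace.single_apply, mul_comm]
      rw [map_add, e0, e1, L.map_smul, L.map_smul]; simp [a, b, mul_comm]
    have hnh : ‖h‖ = Real.sqrt (h 0 ^ 2 + h 1 ^ 2) := by
      rw [EuclideanSpace.norm_eq]
      congr 1
      simp [Fin.sum_univ_two, _root_.sq_abs]
    rw [hL, hnh, Real.norm_eq_abs, ← Real.sqrt_mul_self (abs_nonneg (h 0 * a + h 1 * b)),
      ← Real.sqrt_mul (by positivity)]
    apply Real.sqrt_le_sqrt
    rw [abs_mul_abs_self]
    nlinarith [sq_nonneg (h 0 * b - h 1 * a)]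
  calc ‖L‖ ^ 2 ≤ Real.sqrt (a ^ 2 + b ^ 2) ^ 2 := by
        apply pow_le_pow_left₀ (norm_nonneg _) hM
    _ = a ^ 2 + b ^ 2 := Real.sq_sqrt (by positivity)

lemma key (u v d00 d01 d10 d11 D0 D1 : ℂ) (a1 a2 : ℝ)
    (hD0 : D0 = -Complex.I * d00 + a1 * u) (hD1 : D1 = -Complex.I * d01 + a1 * v)
    (hE0 : -Complex.I * d10 + a2 * u = Complex.I * D0)
    (hE1 : -Complex.I * d11 + a2 * v = -Complex.I * D1) :
    2 * ((u.re * d00.re + u.im * d00.im + (v.re * d01.re + v.im * d01.im)) ^ 2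
        + (u.re * d10.re + u.im * d10.im + (v.re * d11.re + v.im * d11.im)) ^ 2)
      ≤ (u.re * u.re + u.im * u.im + (v.re * v.re + v.im * v.im))
          * (2 * (normSq D0 + normSq D1)) := by
  have h00 : d00 = Complex.I * D0 - Complex.I * (a1 : ℂ) * u := by
    rw [hD0]; ring_nf; rw [Complex.I_sq]; ring
  have h01 : d01 = Complex.I * D1 - Complex.I * (a1 : ℂ) * v := by
    rw [hD1]; ring_nf; rw [Complex.I_sq]; ring
  have h10 : d10 = -D0 - Complex.I * (a2 : ℂ) * u := by
    calc d10 = Complex.I * (-Complex.I * d10 + a2 * u - (a2:ℂ) * u) := by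
              ring_nf; rw [Complex.I_sq]; ring
      _ = Complex.I * (Complex.I * D0 - (a2:ℂ) * u) := by rw [hE0]
      _ = -D0 - Complex.I * (a2 : ℂ) * u := by ring_nf; rw [Complex.I_sq]; ring
  have h11 : d11 = D1 - Complex.I * (a2 : ℂ) * v := by
    calc d11 = Complex.I * (-Complex.I * d11 + a2 * v - (a2:ℂ) * v) := by
              ring_nf; rw [Complex.I_sq]; ring
      _ = Complex.I * (-Complex.I * D1 - (a2:ℂ) * v) := by rw [hE1]
      _ = D1 - Complex.I * (a2 : ℂ) * v := by ring_nf; rw [Complex.I_sq]; ring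
  subst h00 h01 h10 h11
  simp only [Complex.sub_re, Complex.sub_im, Complex.mul_re, Complex.mul_im,
    Complex.neg_re, Complex.neg_im, Complex.I_re, Complex.I_im, Complex.ofReal_re,
    Complex.ofReal_im, Complex.normSq_apply]
  nlinarith [sq_nonneg (u.re * D1.re + u.im * D1.im + (v.re * D0.re + v.im * D0.im)),
    sq_nonneg (u.re * D1.im - u.im * D1.re - (v.re * D0.im - v.im * D0.re)),
    sq_nonneg u.re]

set_option maxHeartbeats 2000000 in
/-- Improved diamagnetic inequality for zero modes: if σ·(−i∇+A)ψ = 0, then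
|(−i∇+A)ψ|² ≥ 2|∇|ψ||² almost everywhere. -/
theorem improved_diamagnetic_inequality
    (ψ : EuclideanSpace ℝ (Fin 2) → Fin 2 → ℂ)
    (A1 A2 : EuclideanSpace ℝ (Fin 2) → ℝ)
    (hψ : ContDiff ℝ (⊤ : ℕ∞) ψ)
    (hzm : ∀ x, pauliOp A1 A2 ψ x = 0) :
    ∀ᵐ x : EuclideanSpace ℝ (Fin 2),
      2 * ‖fderiv ℝ (fun y => enorm2 (ψ y)) x‖ ^ 2
        ≤ enorm2 (covD A1 0 ψ x) ^ 2 + enorm2 (covD A2 1 ψ x) ^ 2 := by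
  apply ae_of_all
  intro x
  -- zero-mode relations
  have h0 := congrFun (hzm x) 0
  have h1 := congrFun (hzm x) 1
  simp [pauliOp, Matrix.mulVec, dotProduct, Fin.sum_univ_two, Matrix.vecHead, Matrix.vecTail] at h0 h1
  have hI : (Complex.I) ^ 2 = -1 := Complex.I_sq
  have hK0 : covD A2 1 ψ x 0 = Complex.I * covD A1 0 ψ x 0 := by
    linear_combination (-Complex.I) * h1 + (covD A2 1 ψ x 0) * hI
  have hK1 : covD A2 1 ψ x 1 = -Complex.I * covD A1 0 ψ x 1 := by
    linear_combination Complex.I * h0 + (covD A2 1 ψ x 1) * hI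
  -- RHS rewrite
  have hRHS : enorm2 (covD A1 0 ψ x) ^ 2 + enorm2 (covD A2 1 ψ x) ^ 2
      = 2 * (Complex.normSq (covD A1 0 ψ x 0) + Complex.normSq (covD A1 0 ψ x 1)) := by
    rw [enorm2_sq, enorm2_sq, hK0, hK1]
    simp [Complex.normSq_mul, Complex.normSq_I]
    ring
  rw [hRHS]
  have hRnn : (0:ℝ) ≤ 2 * (Complex.normSq (covD A1 0 ψ x 0) + Complex.normSq (covD A1 0 ψ x 1)) := by
    have := Complex.normSq_nonneg (covD A1 0 ψ x 0)
    have := Complex.normSq_nonneg (covD A1 0 ψ x 1)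
    linarith
  by_cases hx0 : ψ x = 0
  · -- local min case
    have hmin : IsLocalMin (fun y => enorm2 (ψ y)) x := by
      apply Filter.Eventually.of_forall
      intro y
      show enorm2 (ψ x) ≤ enorm2 (ψ y)
      rw [hx0]
      have h00 : enorm2 0 = 0 := by simp [enorm2]
      rw [h00]
      exact norm_nonneg _
    rw [hmin.fderiv_eq_zero]
    simpa using hRnn
  · -- main case
    set u := ψ x 0 with hu
    set v := ψ x 1 with hv
    set Qx : ℝ := u.re * u.re + u.im * u.im + (v.re * v.re + v.im * v.im) with hQx
    have hQnn : (0:ℝ) ≤ Qx := by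
      rw [hQx]
      nlinarith [mul_self_nonneg u.re, mul_self_nonneg u.im, mul_self_nonneg v.re,
        mul_self_nonneg v.im]
    have hQpos : 0 < Qx := by
      rcases lt_or_eq_of_le hQnn with h | h
      · exact h
      · exfalso
        apply hx0
        have h1 : u = 0 := by
          apply Complex.ext <;> simp only [Complex.zero_re, Complex.zero_im] <;>
            nlinarith [mul_self_nonneg u.re, mul_self_nonneg u.im, mul_self_nonneg v.re,
              mul_self_nonneg v.im]
        have h2 : v = 0 := by
          apply Complex.ext <;> simp only [Complex.zero_re, Complex.zero_im] <;>
            nlinarith [mul_self_nonneg u.re, mul_self_nonneg u.im, mul_self_nonneg v.re,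
              mul_self_nonneg v.im]
        funext k
        fin_cases k
        · exact h1
        · exact h2
    -- derivatives
    have hF : HasFDerivAt ψ (fderiv ℝ ψ x) x :=
      ((hψ.differentiable (by simp)) x).hasFDerivAt
    set F := fderiv ℝ ψ x with hFdef
    have hc : ∀ k : Fin 2, HasFDerivAt (fun y => ψ y k)
        ((ContinuousLinearMap.proj k).comp F) x := by
      intro k
      exact (ContinuousLinearMap.proj (R := ℝ) (φ := fun _ : Fin 2 => ℂ) k).hasFDerivAt.comp x hF
    have hre : ∀ k : Fin 2, HasFDerivAt (fun y => (ψ y k).re)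
        (Complex.reCLM.comp ((ContinuousLinearMap.proj k).comp F)) x :=
      fun k => (Complex.reCLM.hasFDerivAt).comp x (hc k)
    have him : ∀ k : Fin 2, HasFDerivAt (fun y => (ψ y k).im)
        (Complex.imCLM.comp ((ContinuousLinearMap.proj k).comp F)) x :=
      fun k => (Complex.imCLM.hasFDerivAt).comp x (hc k)
    have hq : HasFDerivAt (fun y => (ψ y 0).re * (ψ y 0).re + (ψ y 0).im * (ψ y 0).im
        + ((ψ y 1).re * (ψ y 1).re + (ψ y 1).im * (ψ y 1).im))
        ((((ψ x 0).re • (Complex.reCLM.comp ((ContinuousLinearMap.proj 0).comp F))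
            + (ψ x 0).re • (Complex.reCLM.comp ((ContinuousLinearMap.proj 0).comp F)))
          + ((ψ x 0).im • (Complex.imCLM.comp ((ContinuousLinearMap.proj 0).comp F))
            + (ψ x 0).im • (Complex.imCLM.comp ((ContinuousLinearMap.proj 0).comp F))))
          + (((ψ x 1).re • (Complex.reCLM.comp ((ContinuousLinearMap.proj 1).comp F))
            + (ψ x 1).re • (Complex.reCLM.comp ((ContinuousLinearMap.proj 1).comp F)))
          + ((ψ x 1).im • (Complex.imCLM.comp ((ContinuousLinearMap.proj 1).comp F))
            + (ψ x 1).im • (Complex.imCLM.comp ((ContinuousLinearMap.proj 1).comp F))))) x :=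
      (((hre 0).mul (hre 0)).add ((him 0).mul (him 0))).add
        (((hre 1).mul (hre 1)).add ((him 1).mul (him 1)))
    have hQxval : (ψ x 0).re * (ψ x 0).re + (ψ x 0).im * (ψ x 0).im
        + ((ψ x 1).re * (ψ x 1).re + (ψ x 1).im * (ψ x 1).im) = Qx := rfl
    have hfeq : (fun y => enorm2 (ψ y)) = (fun y => Real.sqrt ((ψ y 0).re * (ψ y 0).re
        + (ψ y 0).im * (ψ y 0).im
        + ((ψ y 1).re * (ψ y 1).re + (ψ y 1).im * (ψ y 1).im))) :=
      funext fun y => enorm2_eq (ψ y)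
    have hgq := hq.sqrt (by rw [hQxval]; exact ne_of_gt hQpos)
    have hfder : fderiv ℝ (fun y => enorm2 (ψ y)) x
        = (1 / (2 * Real.sqrt Qx)) • ((((ψ x 0).re • (Complex.reCLM.comp ((ContinuousLinearMap.proj 0).comp F))
            + (ψ x 0).re • (Complex.reCLM.comp ((ContinuousLinearMap.proj 0).comp F)))
          + ((ψ x 0).im • (Complex.imCLM.comp ((ContinuousLinearMap.proj 0).comp F))
            + (ψ x 0).im • (Complex.imCLM.comp ((ContinuousLinearMap.proj 0).comp F))))
          + (((ψ x 1).re • (Complex.reCLM.comp ((ContinuousLinearMap.proj 1).comp F))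
            + (ψ x 1).re • (Complex.reCLM.comp ((ContinuousLinearMap.proj 1).comp F)))
          + ((ψ x 1).im • (Complex.imCLM.comp ((ContinuousLinearMap.proj 1).comp F))
            + (ψ x 1).im • (Complex.imCLM.comp ((ContinuousLinearMap.proj 1).comp F))))) := by
      rw [hfeq]
      exact hgq.fderiv
    set s := Real.sqrt Qx with hsdef
    have hspos : 0 < s := Real.sqrt_pos.mpr hQpos
    have hs : s ^ 2 = Qx := Real.sq_sqrt hQnn
    set d00 := F (EuclideanSpace.single 0 1) 0 with hd00
    set d01 := F (EuclideanSpace.single 0 1) 1 with hd01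
    set d10 := F (EuclideanSpace.single 1 1) 0 with hd10
    set d11 := F (EuclideanSpace.single 1 1) 1 with hd11
    set S0 : ℝ := u.re * d00.re + u.im * d00.im + (v.re * d01.re + v.im * d01.im) with hS0
    set S1 : ℝ := u.re * d10.re + u.im * d10.im + (v.re * d11.re + v.im * d11.im) with hS1
    have hP0 : (fderiv ℝ (fun y => enorm2 (ψ y)) x) (EuclideanSpace.single 0 1) = S0 / s := by
      rw [hfder]
      simp only [ContinuousLinearMap.smul_apply, ContinuousLinearMap.add_apply,
        ContinuousLinearMap.coe_comp', Function.comp_apply, ContinuousLinearMap.proj_apply,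
        Complex.reCLM_apply, Complex.imCLM_apply, smul_eq_mul]
      rw [hS0, hd00, hd01, hu, hv]
      field_simp
      ring
    have hP1 : (fderiv ℝ (fun y => enorm2 (ψ y)) x) (EuclideanSpace.single 1 1) = S1 / s := by
      rw [hfder]
      simp only [ContinuousLinearMap.smul_apply, ContinuousLinearMap.add_apply,
        ContinuousLinearMap.coe_comp', Function.comp_apply, ContinuousLinearMap.proj_apply,
        Complex.reCLM_apply, Complex.imCLM_apply, smul_eq_mul]
      rw [hS1, hd10, hd11, hu, hv]
      field_simp
      ring
    have hD0 : covD A1 0 ψ x 0 = -Complex.I * d00 + (A1 x : ℂ) * u := by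
      rw [hd00, hFdef, hu]
      simp only [covD, Pi.add_apply, Pi.smul_apply, smul_eq_mul]
    have hD1 : covD A1 0 ψ x 1 = -Complex.I * d01 + (A1 x : ℂ) * v := by
      rw [hd01, hFdef, hv]
      simp only [covD, Pi.add_apply, Pi.smul_apply, smul_eq_mul]
    have hC20 : covD A2 1 ψ x 0 = -Complex.I * d10 + (A2 x : ℂ) * u := by
      rw [hd10, hFdef, hu]
      simp only [covD, Pi.add_apply, Pi.smul_apply, smul_eq_mul]
    have hC21 : covD A2 1 ψ x 1 = -Complex.I * d11 + (A2 x : ℂ) * v := by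
      rw [hd11, hFdef, hv]
      simp only [covD, Pi.add_apply, Pi.smul_apply, smul_eq_mul]
    have hE0 : -Complex.I * d10 + (A2 x : ℂ) * u = Complex.I * covD A1 0 ψ x 0 := by
      rw [← hC20]; exact hK0
    have hE1 : -Complex.I * d11 + (A2 x : ℂ) * v = -Complex.I * covD A1 0 ψ x 1 := by
      rw [← hC21]; exact hK1
    have hmain := key u v d00 d01 d10 d11 (covD A1 0 ψ x 0) (covD A1 0 ψ x 1)
      (A1 x) (A2 x) hD0 hD1 hE0 hE1
    have hbound := opnorm_sq_le (fderiv ℝ (fun y => enorm2 (ψ y)) x)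
    rw [hP0, hP1] at hbound
    have hfin : 2 * ((S0 / s) ^ 2 + (S1 / s) ^ 2)
        ≤ 2 * (Complex.normSq (covD A1 0 ψ x 0) + Complex.normSq (covD A1 0 ψ x 1)) := by
      rw [← hS0, ← hS1, ← hQx] at hmain
      rw [div_pow, div_pow, hs, ← add_div, ← mul_div_assoc, div_le_iff₀ hQpos]
      nlinarith [hmain]
    nlinarith [hbound, hfin]
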